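/- There exists a constant N such that for every prime p > N and all a, b ∈ ℤ/pℤ with a ≠ b, the graph on ℤ/pℤ in which distinct elements x and y are adjacent if and only if y = x² + a, x = y² + a, y = x² + b, or x = y² + b has negative Euler characteristic: χ(G) < 0. -/

import Mathlib

/-!
Write `f_c x = x ^ 2 + c`. Every `x` gives the edges `{x, f_a x}` and `{x, f_b x}`, and these `2p`
edges are genuine and pairwise distinct unless `f_c x = x` or `f_c' (f_c x) = x`, which happens
for at most `20` values of `x`; so `v₁ ≥ 2p - 40` while `v₀ = p`. Eliminating the other two
vertices of a triangle from the three edge relations shows that each vertex of a triangle is a root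
of a fixed monic polynomial of degree at most `128`. Hence every clique with at least three vertices
lies in a set of at most `128` vertices, these cliques number at most `2 ^ 128`, and
`χ ≤ p - (2p - 40) + 2 ^ 128 < 0` once `p > 2 ^ 128 + 40`.
-/

/-- The two-generator quadratic orbital graph on `ℤ/pℤ`: two distinct vertices `x, y` are
adjacent if and only if `y = x² + a`, `x = y² + a`, `y = x² + b` or `x = y² + b`. -/
def quadGraph2 (p : ℕ) (a b : ZMod p) : SimpleGraph (ZMod p) :=
  SimpleGraph.fromRel (fun x y => y = x ^ 2 + a ∨ y = x ^ 2 + b)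

/-- `v_k`: the number of `(k+1)`-element cliques of `quadGraph2 p a b`. -/
noncomputable def v (p : ℕ) (a b : ZMod p) (k : ℕ) : ℕ :=
  Nat.card {s : Finset (ZMod p) // (quadGraph2 p a b).IsNClique (k + 1) s}

/-- The Euler characteristic `χ(G) = Σ_{k ≥ 0} (-1)^k v_k` of `quadGraph2 p a b`
(the sum is finite: cliques have at most `p` vertices). -/
noncomputable def eulerChar (p : ℕ) (a b : ZMod p) : ℤ :=
  ∑ k ∈ Finset.range p, (-1 : ℤ) ^ k * v p a b k

open Finset Polynomial SimpleGraph

section Polynomials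

variable {R : Type*} [CommRing R] [DecidableEq R] (a b : R)

/-- Its roots are the `x` with `f_c x = x` or `f_c' (f_c x) = x` for some `c, c' ∈ {a, b}`,
where `f_c x = x ^ 2 + c`. -/
noncomputable def twoCyclePoly : R[X] :=
  ∏ c ∈ {a, b}, ((X ^ 2 + C c - X) * ∏ c' ∈ {a, b}, ((X ^ 2 + C c) ^ 2 + C c' - X))

/-- Its factors, over `c₁, c₂, c₃ ∈ {a, b}`, are the relations left on a vertex `x` of a triangle
of `quadGraph2` once the other two vertices are eliminated, one for each way of orienting the three
edges as `y = f_c x`. -/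
noncomputable def trianglePoly : R[X] :=
  ∏ c₁ ∈ {a, b}, ∏ c₂ ∈ {a, b}, ∏ c₃ ∈ {a, b},
    ((X ^ 2 + C c₁) ^ 2 + C c₃ - (X ^ 2 + C c₂)) * (((X ^ 2 + C c₁) ^ 2 + C c₃) ^ 2 + C c₂ - X) *
      (X ^ 2 + C c₁ - (X - C c₂ + C c₃)) * ((X - C c₁ + C c₃) ^ 2 - (X - C c₂))

lemma natDegree_prod_pair_le (f : R → R[X]) {n : ℕ} (hf : ∀ c, (f c).natDegree ≤ n) :
    (∏ c ∈ {a, b}, f c).natDegree ≤ 2 * n :=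
  (natDegree_prod_le _ _).trans <| (sum_le_card_nsmul _ _ n fun c _ => hf c).trans <|
    Nat.mul_le_mul_right n card_le_two

lemma natDegree_twoCyclePoly_le : (twoCyclePoly a b).natDegree ≤ 20 := by
  unfold twoCyclePoly
  exact natDegree_prod_pair_le a b _ (n := 10) fun _ => natDegree_mul_le.trans <| add_le_add
    (by compute_degree) (natDegree_prod_pair_le a b _ (n := 4) fun _ => by compute_degree)

lemma natDegree_trianglePoly_le : (trianglePoly a b).natDegree ≤ 128 := by
  unfold trianglePoly
  exact natDegree_prod_pair_le a b _ (n := 64) fun _ => natDegree_prod_pair_le a b _ (n := 32)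
    fun _ => natDegree_prod_pair_le a b _ (n := 16) fun _ => by compute_degree

lemma eval_twoCyclePoly_eq_zero {x c c' : R} (hc : c ∈ ({a, b} : Finset R))
    (hc' : c' ∈ ({a, b} : Finset R)) (h : x = x ^ 2 + c ∨ x = (x ^ 2 + c) ^ 2 + c') :
    (twoCyclePoly a b).eval x = 0 := by
  simp only [twoCyclePoly, eval_prod, eval_mul]
  refine prod_eq_zero hc ?_
  rcases h with h | h
  · simp [← h]
  · exact mul_eq_zero_of_right _ <| prod_eq_zero hc' <| by simp [← h]

lemma twoCyclePoly_monic : (twoCyclePoly a b).Monic := by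
  unfold twoCyclePoly
  exact monic_prod_of_monic _ _ fun _ _ => Monic.mul (by monicity!) <|
    monic_prod_of_monic _ _ fun _ _ => by monicity!

lemma trianglePoly_monic : (trianglePoly a b).Monic := by
  unfold trianglePoly
  exact monic_prod_of_monic _ _ fun _ _ => monic_prod_of_monic _ _ fun _ _ =>
    monic_prod_of_monic _ _ fun _ _ => by monicity!

lemma card_roots_toFinset_le_natDegree {R : Type*} [CommRing R] [IsDomain R] [DecidableEq R]
    (q : R[X]) : #q.roots.toFinset ≤ q.natDegree :=
  (Multiset.toFinset_card_le _).trans (card_roots' q)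

end Polynomials


namespace SimpleGraph

variable {V : Type*} [DecidableEq V] {G : SimpleGraph V} {B : Finset V}

lemma IsNClique.subset_of_forall_triangle
    (hB : ∀ x y z, G.Adj x y → G.Adj x z → G.Adj y z → x ∈ B) {n : ℕ} {s : Finset V}
    (hn : 3 ≤ n) (hs : G.IsNClique n s) : s ⊆ B := by
  intro x hx
  have hcard : 1 < #(s.erase x) := by
    rw [card_erase_of_mem hx, hs.card_eq]
    omega
  obtain ⟨y, hy, z, hz, hyz⟩ := one_lt_card.1 hcard
  have hys := mem_of_mem_erase hy
  have hzs := mem_of_mem_erase hz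
  exact hB x y z (hs.1 hx hys (ne_of_mem_erase hy).symm) (hs.1 hx hzs (ne_of_mem_erase hz).symm)
    (hs.1 hys hzs hyz)

lemma sum_card_cliqueFinset_le_two_pow [Fintype V] [DecidableRel G.Adj]
    (hB : ∀ x y z, G.Adj x y → G.Adj x z → G.Adj y z → x ∈ B) (S : Finset ℕ)
    (hS : ∀ k ∈ S, 2 ≤ k) : ∑ k ∈ S, #(G.cliqueFinset (k + 1)) ≤ 2 ^ #B := by
  have hdisj : (S : Set ℕ).PairwiseDisjoint fun k => G.cliqueFinset (k + 1) := by
    intro k _ l _ hkl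
    refine Finset.disjoint_left.2 fun s hk hl => hkl ?_
    rw [mem_cliqueFinset_iff] at hk hl
    have := hk.card_eq.symm.trans hl.card_eq
    omega
  have hsub : S.biUnion (fun k => G.cliqueFinset (k + 1)) ⊆ B.powerset := by
    intro s hs
    obtain ⟨k, hk, hs⟩ := mem_biUnion.1 hs
    exact mem_powerset.2 <|
      (mem_cliqueFinset_iff.1 hs).subset_of_forall_triangle hB (by linarith [hS k hk])
  rw [← card_biUnion hdisj, ← card_powerset]
  exact card_le_card hsub

end SimpleGraph

section QuadGraph2

variable {p : ℕ} {a b : ZMod p}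

lemma quadGraph2_adj_sq_add {x c : ZMod p} (hc : c ∈ ({a, b} : Finset (ZMod p)))
    (hx : x ≠ x ^ 2 + c) : (quadGraph2 p a b).Adj x (x ^ 2 + c) := by
  rw [mem_insert, mem_singleton] at hc
  rcases hc with rfl | rfl <;> simp [quadGraph2, hx]

lemma exists_eq_sq_add_of_quadGraph2_adj {x y : ZMod p} (h : (quadGraph2 p a b).Adj x y) :
    ∃ c ∈ ({a, b} : Finset (ZMod p)), y = x ^ 2 + c ∨ x = y ^ 2 + c := by
  simp only [quadGraph2, fromRel_adj] at h
  simp only [mem_insert, mem_singleton, exists_eq_or_imp, exists_eq_left]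
  tauto

lemma eval_trianglePoly_eq_zero {x y z : ZMod p} (hxy : (quadGraph2 p a b).Adj x y)
    (hxz : (quadGraph2 p a b).Adj x z) (hyz : (quadGraph2 p a b).Adj y z) :
    (trianglePoly a b).eval x = 0 := by
  suffices ∃ c₁ ∈ ({a, b} : Finset (ZMod p)), ∃ c₂ ∈ ({a, b} : Finset (ZMod p)),
      ∃ c₃ ∈ ({a, b} : Finset (ZMod p)),
      (x ^ 2 + c₁) ^ 2 + c₃ = x ^ 2 + c₂ ∨ ((x ^ 2 + c₁) ^ 2 + c₃) ^ 2 + c₂ = x ∨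
        x ^ 2 + c₁ = x - c₂ + c₃ ∨ (x - c₁ + c₃) ^ 2 = x - c₂ by
    obtain ⟨c₁, h₁, c₂, h₂, c₃, h₃, h⟩ := this
    simp only [trianglePoly, eval_prod]
    refine prod_eq_zero h₁ <| prod_eq_zero h₂ <| prod_eq_zero h₃ ?_
    rcases h with h | h | h | h <;> simp [h]
  obtain ⟨c₁, h₁, hxy⟩ := exists_eq_sq_add_of_quadGraph2_adj hxy
  obtain ⟨c₂, h₂, hxz⟩ := exists_eq_sq_add_of_quadGraph2_adj hxz
  obtain ⟨c₃, h₃, hyz⟩ := exists_eq_sq_add_of_quadGraph2_adj hyz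
  rcases hxy with hxy | hxy <;> rcases hxz with hxz | hxz <;> rcases hyz with hyz | hyz
  · exact ⟨c₁, h₁, c₂, h₂, c₃, h₃, Or.inl <| by
      linear_combination hxz - hyz - (x ^ 2 + c₁ + y) * hxy⟩
  · exact ⟨c₂, h₂, c₁, h₁, c₃, h₃, Or.inl <| by
      linear_combination hxy - hyz - (x ^ 2 + c₂ + z) * hxz⟩
  · exact ⟨c₁, h₁, c₂, h₂, c₃, h₃, Or.inr <| Or.inl <| by
      linear_combination -((x ^ 2 + c₁) ^ 2 + c₃ + z) * (x ^ 2 + c₁ + y) * hxy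
        - ((x ^ 2 + c₁) ^ 2 + c₃ + z) * hyz - hxz⟩
  · exact ⟨c₁, h₁, c₂, h₂, c₃, h₃, Or.inr <| Or.inr <| Or.inl <| by
      linear_combination hyz - hxy - hxz⟩
  · exact ⟨c₂, h₂, c₁, h₁, c₃, h₃, Or.inr <| Or.inr <| Or.inl <| by
      linear_combination hyz - hxz - hxy⟩
  · exact ⟨c₂, h₂, c₁, h₁, c₃, h₃, Or.inr <| Or.inl <| by
      linear_combination -((x ^ 2 + c₂) ^ 2 + c₃ + y) * (x ^ 2 + c₂ + z) * hxz
        - ((x ^ 2 + c₂) ^ 2 + c₃ + y) * hyz - hxy⟩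
  · exact ⟨c₁, h₁, c₂, h₂, c₃, h₃, Or.inr <| Or.inr <| Or.inr <| by
      linear_combination (x - c₁ + y ^ 2 + 2 * c₃) * hxy - (y ^ 2 + c₃ + z) * hyz - hxz⟩
  · exact ⟨c₂, h₂, c₁, h₁, c₃, h₃, Or.inr <| Or.inr <| Or.inr <| by
      linear_combination (x - c₂ + z ^ 2 + 2 * c₃) * hxz - (z ^ 2 + c₃ + y) * hyz - hxy⟩

end QuadGraph2

section Counting

variable {p : ℕ} (a b : ZMod p)

section NeZero

variable [NeZero p]

open scoped Classical in
lemma v_eq_card_cliqueFinset (k : ℕ) :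
    v p a b k = #((quadGraph2 p a b).cliqueFinset (k + 1)) := by
  simp only [v, ← mem_cliqueFinset_iff, Nat.card_eq_fintype_card, Fintype.card_coe]

lemma v_zero : v p a b 0 = p := by
  classical
  have hcliques :
      (quadGraph2 p a b).cliqueFinset 1 = univ.map ⟨singleton, singleton_injective⟩ := by
    ext s
    simp [mem_cliqueFinset_iff, isNClique_one, eq_comm]
  rw [v_eq_card_cliqueFinset, hcliques, card_map, card_univ, ZMod.card]

end NeZero

variable [Fact p.Prime]

lemma two_mul_le_v_one_add (hab : a ≠ b) : 2 * p ≤ v p a b 1 + 40 := by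
  classical
  set R := (twoCyclePoly a b).roots.toFinset
  have hR : #R ≤ 20 :=
    (card_roots_toFinset_le_natDegree _).trans (natDegree_twoCyclePoly_le a b)
  have hmemR {x c c' : ZMod p} (hc : c ∈ ({a, b} : Finset (ZMod p)))
      (hc' : c' ∈ ({a, b} : Finset (ZMod p))) (h : x = x ^ 2 + c ∨ x = (x ^ 2 + c) ^ 2 + c') :
      x ∈ R := by
    rw [Multiset.mem_toFinset, mem_roots (twoCyclePoly_monic a b).ne_zero]
    exact eval_twoCyclePoly_eq_zero a b hc hc' h
  have hmaps : ∀ xc ∈ Rᶜ ×ˢ {a, b}, ({xc.1, xc.1 ^ 2 + xc.2} : Finset (ZMod p)) ∈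
      (quadGraph2 p a b).cliqueFinset 2 := by
    rintro ⟨x, c⟩ hxc
    obtain ⟨hx, hc⟩ := mem_product.1 hxc
    have hadj := quadGraph2_adj_sq_add hc fun h => mem_compl.1 hx (hmemR hc hc (.inl h))
    refine mem_cliqueFinset_iff.2 ((isNClique_iff _).2 ⟨?_, card_pair hadj.ne⟩)
    rw [coe_pair]
    exact isClique_pair.2 fun _ => hadj
  -- a collision `{x, f_c x} = {x', f_c' x'}` with `x ≠ x'` forces `x = f_c' (f_c x)`
  have hinj : Set.InjOn (fun xc : ZMod p × ZMod p => ({xc.1, xc.1 ^ 2 + xc.2} : Finset (ZMod p)))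
      ↑(Rᶜ ×ˢ {a, b}) := by
    rintro ⟨x, c⟩ hxc ⟨x', c'⟩ hxc' hpair
    obtain ⟨hx, hc⟩ := mem_product.1 hxc
    obtain ⟨-, hc'⟩ := mem_product.1 hxc'
    have hpair : ({x, x ^ 2 + c} : Set (ZMod p)) = {x', x' ^ 2 + c'} := by
      simpa only [coe_pair] using congrArg ((↑) : Finset (ZMod p) → Set (ZMod p)) hpair
    rcases Set.pair_eq_pair_iff.1 hpair with ⟨rfl, h⟩ | ⟨h₁, h₂⟩
    · rw [add_left_cancel h]
    · refine absurd (hmemR hc hc' (.inr ?_)) (mem_compl.1 hx)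
      rwa [h₂]
  have hcard := card_le_card_of_injOn _ hmaps hinj
  rw [card_product, card_compl, ZMod.card, card_pair hab, ← v_eq_card_cliqueFinset] at hcard
  omega

lemma sum_v_le_two_pow (n : ℕ) : ∑ k ∈ Ico 2 n, v p a b k ≤ 2 ^ 128 := by
  classical
  simp only [v_eq_card_cliqueFinset]
  refine (sum_card_cliqueFinset_le_two_pow (B := (trianglePoly a b).roots.toFinset) ?_ _
    fun k hk => (mem_Ico.1 hk).1).trans ?_
  · intro x y z hxy hxz hyz
    rw [Multiset.mem_toFinset, mem_roots (trianglePoly_monic a b).ne_zero]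
    exact eval_trianglePoly_eq_zero hxy hxz hyz
  · exact Nat.pow_le_pow_right two_pos <|
      (card_roots_toFinset_le_natDegree _).trans (natDegree_trianglePoly_le a b)

end Counting

/-- There is a constant `N` such that for every prime `p > N` and all `a ≠ b` in `ℤ/pℤ`,
the two-generator quadratic orbital graph has negative Euler characteristic. -/
theorem quadGraph2_euler_neg :
    ∃ N : ℕ, ∀ p : ℕ, p.Prime → N < p → ∀ a b : ZMod p, a ≠ b →
      eulerChar p a b < 0 := by
  refine ⟨2 ^ 128 + 40, fun p hp hpN a b hab => ?_⟩
  have := Fact.mk hp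
  have hsplit : eulerChar p a b =
      v p a b 0 - v p a b 1 + ∑ k ∈ Ico 2 p, (-1 : ℤ) ^ k * v p a b k := by
    rw [eulerChar, range_eq_Ico, sum_eq_sum_Ico_succ_bot (by omega),
      sum_eq_sum_Ico_succ_bot (by omega)]
    ring
  have htail : ∑ k ∈ Ico 2 p, (-1 : ℤ) ^ k * v p a b k ≤ 2 ^ 128 := calc
    _ ≤ ∑ k ∈ Ico 2 p, (v p a b k : ℤ) :=
      sum_le_sum fun k _ => (le_abs_self _).trans (by simp [abs_mul])
    _ ≤ 2 ^ 128 := by exact_mod_cast sum_v_le_two_pow a b p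
  have hv1 : (2 * p : ℤ) ≤ v p a b 1 + 40 := by exact_mod_cast two_mul_le_v_one_add a b hab
  have hp : (2 ^ 128 + 40 : ℤ) < p := by exact_mod_cast hpN
  rw [hsplit, v_zero]
  linarith
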